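/- arXiv:1603.05541 — 5 statements merged into one kernel-verified Lean document; each statement's English description precedes it below -/
import Mathlib

section
/- The subgroup 𝒢₁ = ⟨P, S⟩ of the symmetric group on 15 elements generated by P and S is isomorphic (as a group) to the alternating group A₅ on 5 letters. -/
/-- P = (1 2 3 4 5)(6 7 8 9 10)(11 12 13 14 15); the label 15 corresponds to (15 : Fin 15) = 0. -/
def P : Equiv.Perm (Fin 15) :=
  c[(1 : Fin 15), 2, 3, 4, 5] * c[(6 : Fin 15), 7, 8, 9, 10] * c[(11 : Fin 15), 12, 13, 14, 15]

/-- T = (3 10)(4 14)(5 8)(6 11)(7 12)(13 15). -/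
def T : Equiv.Perm (Fin 15) :=
  c[(3 : Fin 15), 10] * c[(4 : Fin 15), 14] * c[(5 : Fin 15), 8] * c[(6 : Fin 15), 11] *
    c[(7 : Fin 15), 12] * c[(13 : Fin 15), 15]

/-- S = (1 6 11)(2 15 14)(3 13 8)(4 7 5)(9 12 10). -/
def S : Equiv.Perm (Fin 15) :=
  c[(1 : Fin 15), 6, 11] * c[(2 : Fin 15), 15, 14] * c[(3 : Fin 15), 13, 8] *
    c[(4 : Fin 15), 7, 5] * c[(9 : Fin 15), 12, 10]

/-- R = (2 5)(3 4)(7 10)(8 9)(12 15)(13 14). -/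
def R : Equiv.Perm (Fin 15) :=
  c[(2 : Fin 15), 5] * c[(3 : Fin 15), 4] * c[(7 : Fin 15), 10] * c[(8 : Fin 15), 9] *
    c[(12 : Fin 15), 15] * c[(13 : Fin 15), 14]

/-- U = (1 6 11)(2 7 12)(3 8 13)(4 9 14)(5 10 15). -/
def U : Equiv.Perm (Fin 15) :=
  c[(1 : Fin 15), 6, 11] * c[(2 : Fin 15), 7, 12] * c[(3 : Fin 15), 8, 13] *
    c[(4 : Fin 15), 9, 14] * c[(5 : Fin 15), 10, 15]

/-!
`𝒢₁` is `A₅` acting by conjugation on its fifteen double transpositions. Labelling the points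
by double transpositions, `P` and `S` act as conjugation by `P₅ = (0 1 2 3 4)` and
`S₅ = (1 4 2)`. Hence every element of the subgroup of `Perm (Fin 15) × Perm (Fin 5)` generated
by `(P, P₅)` and `(S, S₅)` preserves the labelling. A double transposition is determined by its
two 2-cycles, and every point of `Fin 5` is the fixed point of one, so each coordinate of such a
pair is trivial iff the other is: the subgroup is the graph of an isomorphism `⟨P, S⟩ ≃* ⟨P₅, S₅⟩`.
Finally `⟨P₅, S₅⟩ = A₅`: its order is divisible by `15`, so its index in `A₅` is at most `4`, while
a proper subgroup of index `n` of the simple group `A₅` gives an embedding `A₅ ↪ Sₙ`.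
-/

open Equiv Pointwise

namespace Subgroup

variable {G H : Type*} [Group G] [Group H]

theorem card_dvd_factorial_index [IsSimpleGroup G] [Finite G] {K : Subgroup G} (hK : K ≠ ⊤) :
    Nat.card G ∣ K.index.factorial := by
  have hcore : K.normalCore = ⊥ := K.normalCore_normal.eq_bot_or_eq_top.resolve_right
    fun h ↦ hK (top_le_iff.mp (h ▸ K.normalCore_le))
  rw [← index_bot, ← hcore, normalCore_eq_ker, index_ker, index_eq_card, ← Nat.card_perm]
  exact card_subgroup_dvd_card (MulAction.toPermHom G (G ⧸ K)).range

theorem eq_top_of_factorial_index_lt [IsSimpleGroup G] [Finite G] {K : Subgroup G}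
    (hK : K.index.factorial < Nat.card G) : K = ⊤ := by
  by_contra hne
  exact absurd (Nat.le_of_dvd (Nat.factorial_pos _) (card_dvd_factorial_index hne)) hK.not_ge

noncomputable def mapFstMulEquivMapSnd (K : Subgroup (G × H))
    (hK : ∀ p ∈ K, p.1 = 1 ↔ p.2 = 1) :
    K.map (MonoidHom.fst G H) ≃* K.map (MonoidHom.snd G H) :=
  have hfst : Function.Injective ((MonoidHom.fst G H).comp K.subtype) :=
    (injective_iff_map_eq_one _).mpr fun p hp ↦ Subtype.ext (Prod.ext hp ((hK p p.2).mp hp))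
  have hsnd : Function.Injective ((MonoidHom.snd G H).comp K.subtype) :=
    (injective_iff_map_eq_one _).mpr fun p hp ↦ Subtype.ext (Prod.ext ((hK p p.2).mpr hp) hp)
  (MulEquiv.subgroupCongr (by rw [MonoidHom.range_comp, range_subtype])).trans <|
    (MonoidHom.ofInjective hfst).symm.trans <| (MonoidHom.ofInjective hsnd).trans <|
      MulEquiv.subgroupCongr (by rw [MonoidHom.range_comp, range_subtype])

end Subgroup

namespace MulAction

variable (G H : Type*) {X Y : Type*} [Group G] [Group H] [MulAction G X] [MulAction H Y]

def equivariantPairs (f : X → Y) : Subgroup (G × H) where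
  carrier := {p | ∀ x, f (p.1 • x) = p.2 • f x}
  one_mem' x := by simp
  mul_mem' {p q} hp hq x := by simp only [Prod.fst_mul, Prod.snd_mul, mul_smul, hp _, hq x]
  inv_mem' {p} hp x := by
    rw [Prod.fst_inv, Prod.snd_inv, eq_inv_smul_iff, ← hp, smul_inv_smul]

variable {G H} {f : X → Y} {p : G × H}

theorem mem_equivariantPairs : p ∈ equivariantPairs G H f ↔ ∀ x, f (p.1 • x) = p.2 • f x :=
  Iff.rfl

theorem fst_eq_one_of_snd_eq_one [FaithfulSMul G X] (hf : Function.Injective f)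
    (hp : p ∈ equivariantPairs G H f) (h : p.2 = 1) : p.1 = 1 :=
  eq_of_smul_eq_smul fun x ↦ hf (by rw [hp x, h, one_smul, one_smul])

theorem snd_eq_one_of_fst_eq_one [FaithfulSMul H Y] (hf : Function.Surjective f)
    (hp : p ∈ equivariantPairs G H f) (h : p.1 = 1) : p.2 = 1 :=
  eq_of_smul_eq_smul fun y ↦ by
    obtain ⟨x, rfl⟩ := hf y
    rw [← hp x, h, one_smul, one_smul]

end MulAction

open Subgroup MulAction

def P₅ : Perm (Fin 5) := c[0, 1, 2, 3, 4]

def S₅ : Perm (Fin 5) := c[1, 4, 2]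

theorem orderOf_P₅ : orderOf P₅ = 5 :=
  have : Fact (Nat.Prime 5) := ⟨by norm_num⟩
  orderOf_eq_prime (by decide) (by decide)

theorem orderOf_S₅ : orderOf S₅ = 3 :=
  orderOf_eq_prime (by decide) (by decide)

theorem closure_P₅_S₅ : closure {P₅, S₅} = alternatingGroup (Fin 5) := by
  have hP : P₅ ∈ alternatingGroup (Fin 5) := by rw [Perm.mem_alternatingGroup]; decide
  have hS : S₅ ∈ alternatingGroup (Fin 5) := by rw [Perm.mem_alternatingGroup]; decide
  set L : Subgroup (alternatingGroup (Fin 5)) := closure {⟨P₅, hP⟩, ⟨S₅, hS⟩}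
  have h15 : 15 ∣ Nat.card L := by
    have h5 := L.orderOf_dvd_natCard (x := ⟨P₅, hP⟩) (subset_closure (by simp))
    have h3 := L.orderOf_dvd_natCard (x := ⟨S₅, hS⟩) (subset_closure (by simp))
    rw [orderOf_mk, orderOf_P₅] at h5
    rw [orderOf_mk, orderOf_S₅] at h3
    exact Nat.Coprime.mul_dvd_of_dvd_of_dvd (by norm_num) h5 h3
  have hindex : L.index ≤ 4 := by
    obtain ⟨k, hk⟩ := h15
    have hcard := L.card_mul_index
    rw [nat_card_alternatingGroup, hk] at hcard
    norm_num [Nat.factorial] at hcard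
    exact Nat.le_of_dvd (by norm_num) ⟨k, by linarith⟩
  have hL : L = ⊤ := eq_top_of_factorial_index_lt <|
    calc L.index.factorial ≤ Nat.factorial 4 := Nat.factorial_le hindex
      _ < Nat.card (alternatingGroup (Fin 5)) := by
        rw [nat_card_alternatingGroup]; norm_num [Nat.factorial]
  calc closure {P₅, S₅} = L.map (alternatingGroup (Fin 5)).subtype := by
        rw [MonoidHom.map_closure, Set.image_pair]; rfl
    _ = alternatingGroup (Fin 5) := by rw [hL, ← MonoidHom.range_eq_map, range_subtype]

/-- Point `i` stands for the double transposition of `Fin 5` with 2-cycles `pairing i` and fixed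
point `fixedPoint i`. -/
def pairing : Fin 15 → Finset (Finset (Fin 5)) :=
  ![{{0, 3}, {1, 4}}, {{0, 1}, {2, 4}}, {{0, 3}, {1, 2}}, {{1, 4}, {2, 3}}, {{0, 2}, {3, 4}},
    {{0, 4}, {1, 3}}, {{0, 4}, {1, 2}}, {{0, 1}, {2, 3}}, {{1, 2}, {3, 4}}, {{0, 4}, {2, 3}},
    {{0, 1}, {3, 4}}, {{0, 2}, {1, 4}}, {{0, 2}, {1, 3}}, {{1, 3}, {2, 4}}, {{0, 3}, {2, 4}}]

def fixedPoint : Fin 15 → Fin 5 := ![2, 3, 4, 0, 1, 2, 3, 4, 0, 1, 2, 3, 4, 0, 1]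

def pairedClosure : Subgroup (Perm (Fin 15) × Perm (Fin 5)) :=
  closure {(P, P₅), (S, S₅)}

theorem pairedClosure_le :
    pairedClosure ≤ equivariantPairs _ _ pairing ⊓ equivariantPairs _ _ fixedPoint := by
  rw [pairedClosure, closure_le]
  rintro _ (rfl | rfl) <;>
    exact ⟨mem_equivariantPairs.mpr (by decide), mem_equivariantPairs.mpr (by decide)⟩

theorem fst_eq_one_iff_snd_eq_one_of_mem_pairedClosure {p : Perm (Fin 15) × Perm (Fin 5)}
    (hp : p ∈ pairedClosure) : p.1 = 1 ↔ p.2 = 1 :=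
  have hinj : Function.Injective pairing := by decide
  have hsurj : Function.Surjective fixedPoint := by decide
  ⟨snd_eq_one_of_fst_eq_one hsurj (pairedClosure_le hp).2,
    fst_eq_one_of_snd_eq_one hinj (pairedClosure_le hp).1⟩

theorem map_fst_pairedClosure : pairedClosure.map (MonoidHom.fst _ _) = closure {P, S} := by
  rw [pairedClosure, MonoidHom.map_closure, Set.image_pair]; rfl

theorem map_snd_pairedClosure :
    pairedClosure.map (MonoidHom.snd _ _) = alternatingGroup (Fin 5) := by
  rw [pairedClosure, MonoidHom.map_closure, Set.image_pair, ← closure_P₅_S₅]; rfl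

/-- `𝒢₁ = ⟨P, S⟩` is isomorphic to the alternating group `A₅`. -/
theorem G1_iso_A5 :
    Nonempty ((Subgroup.closure {P, S} : Subgroup (Equiv.Perm (Fin 15))) ≃*
      alternatingGroup (Fin 5)) :=
  ⟨(MulEquiv.subgroupCongr map_fst_pairedClosure).symm.trans <|
    (mapFstMulEquivMapSnd pairedClosure fun _ ↦
      fst_eq_one_iff_snd_eq_one_of_mem_pairedClosure).trans <|
    MulEquiv.subgroupCongr map_snd_pairedClosure⟩
end

section
/- The subgroup 𝒢₀ = ⟨R, S⟩ of the symmetric group on 15 elements generated by R and S is isomorphic (as a group) to the alternating group A₄ on 4 letters. -/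
set_option maxRecDepth 20000 in
instance : DecidablePred (· ∈ alternatingGroup (Fin 4)) :=
  fun f => decidable_of_iff (Equiv.Perm.sign f = 1) (Equiv.Perm.mem_alternatingGroup).symm

def rA : Equiv.Perm (Fin 4) := c[(0 : Fin 4), 1] * c[(2 : Fin 4), 3]
def sA : Equiv.Perm (Fin 4) := c[(0 : Fin 4), 1, 2]

def tbl (g : Equiv.Perm (Fin 4)) : Equiv.Perm (Fin 15) :=
  if g = 1 then 1 else
  if g = rA then R else
  if g = sA then S else
  if g = rA * sA then R * S else
  if g = sA * rA then S * R else
  if g = sA * sA then S * S else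
  if g = rA * sA * rA then R * S * R else
  if g = rA * sA * sA then R * S * S else
  if g = sA * rA * sA then S * R * S else
  if g = sA * sA * rA then S * S * R else
  if g = sA * rA * sA * sA then S * R * S * S else
  if g = sA * sA * rA * sA then S * S * R * S else
  1


set_option maxRecDepth 100000 in
def phi : alternatingGroup (Fin 4) →* Equiv.Perm (Fin 15) where
  toFun g := tbl g.1
  map_one' := by decide
  map_mul' := by decide

set_option maxRecDepth 100000 in
lemma phi_inj : Function.Injective phi := by
  rw [injective_iff_map_eq_one]
  decide

lemma rA_mem : rA ∈ alternatingGroup (Fin 4) := by decide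
lemma sA_mem : sA ∈ alternatingGroup (Fin 4) := by decide

set_option maxRecDepth 100000 in
lemma tbl_cases : ∀ g : Equiv.Perm (Fin 4), tbl g = 1 ∨ tbl g = R ∨ tbl g = S ∨ tbl g = R * S ∨ tbl g = S * R ∨ tbl g = S * S ∨ tbl g = R * S * R ∨ tbl g = R * S * S ∨ tbl g = S * R * S ∨ tbl g = S * S * R ∨ tbl g = S * R * S * S ∨ tbl g = S * S * R * S := by decide

set_option maxRecDepth 100000 in
set_option maxHeartbeats 4000000 in
lemma phi_range : phi.range = Subgroup.closure {R, S} := by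
  apply le_antisymm
  · rintro x ⟨g, rfl⟩
    have hR : R ∈ Subgroup.closure {R, S} :=
      Subgroup.subset_closure (Set.mem_insert _ _)
    have hS : S ∈ Subgroup.closure {R, S} :=
      Subgroup.subset_closure (Set.mem_insert_of_mem _ rfl)
    show tbl g.1 ∈ _
    have h12 := tbl_cases g.1
    revert h12
    generalize tbl g.1 = x
    rintro (rfl|rfl|rfl|rfl|rfl|rfl|rfl|rfl|rfl|rfl|rfl|rfl)
    exacts [one_mem _, hR, hS, mul_mem hR hS, mul_mem hS hR, mul_mem hS hS,
      mul_mem (mul_mem hR hS) hR, mul_mem (mul_mem hR hS) hS,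
      mul_mem (mul_mem hS hR) hS, mul_mem (mul_mem hS hS) hR,
      mul_mem (mul_mem (mul_mem hS hR) hS) hS, mul_mem (mul_mem (mul_mem hS hS) hR) hS]
  · rw [Subgroup.closure_le]
    rintro x (rfl | rfl)
    · exact ⟨⟨rA, rA_mem⟩, by decide⟩
    · exact ⟨⟨sA, sA_mem⟩, by decide⟩

/-- `𝒢₀ = ⟨R, S⟩` is isomorphic to the alternating group `A₄`. -/
theorem G0_iso_A4 :
    Nonempty ((Subgroup.closure {R, S} : Subgroup (Equiv.Perm (Fin 15))) ≃*
      alternatingGroup (Fin 4)) := by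
  exact ⟨(MulEquiv.subgroupCongr phi_range.symm).trans
    (MonoidHom.ofInjective phi_inj).symm⟩
end

section
/- The subgroup 𝒢̃₀ = ⟨P·R·P⁻¹, S⟩ of the symmetric group on 15 elements generated by the conjugate P·R·P⁻¹ and S is isomorphic (as a group) to the symmetric group S₃ on 3 letters. -/
set_option maxRecDepth 40000
set_option maxHeartbeats 2000000


namespace G0aux

/-- the map sending each element of `S₃` (keyed by its values at 0 and 1)
to the corresponding word in the generators. -/
def w : Fin 3 → Fin 3 → Equiv.Perm (Fin 15) :=
  fun x y =>
    match x, y with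
    | 0, 1 => 1
    | 0, 2 => (P * R * P⁻¹) * S
    | 1, 0 => S * (P * R * P⁻¹)
    | 1, 2 => S * S
    | 2, 0 => S
    | 2, 1 => P * R * P⁻¹
    | _, _ => 1

def psi : Equiv.Perm (Fin 3) →* Equiv.Perm (Fin 15) :=
  MonoidHom.mk' (fun g => w (g 0) (g 1)) (by decide)

lemma psi_inj : Function.Injective psi := by
  intro g h
  exact (by decide : ∀ g h : Equiv.Perm (Fin 3), psi g = psi h → g = h) g h

lemma range_eq : psi.range = Subgroup.closure {P * R * P⁻¹, S} := by
  apply le_antisymm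
  · rintro x ⟨g, rfl⟩
    have ha : (P * R * P⁻¹) ∈ Subgroup.closure {P * R * P⁻¹, S} :=
      Subgroup.subset_closure (Set.mem_insert _ _)
    have hb : S ∈ Subgroup.closure {P * R * P⁻¹, S} :=
      Subgroup.subset_closure (Set.mem_insert_of_mem _ rfl)
    show w (g 0) (g 1) ∈ _
    have key : ∀ x y : Fin 3, w x y ∈ Subgroup.closure {P * R * P⁻¹, S} := by
      intro x y
      fin_cases x <;> fin_cases y
      · exact Subgroup.one_mem _
      · exact Subgroup.one_mem _
      · exact Subgroup.mul_mem _ ha hb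
      · exact Subgroup.mul_mem _ hb ha
      · exact Subgroup.one_mem _
      · exact Subgroup.mul_mem _ hb hb
      · exact hb
      · exact ha
      · exact Subgroup.one_mem _
    exact key _ _
  · rw [Subgroup.closure_le]
    rintro x (rfl | rfl)
    · exact ⟨Equiv.swap 0 2, by decide⟩
    · exact ⟨c[(0 : Fin 3), 2, 1], by decide⟩

end G0aux
/-- `𝒢̃₀ = ⟨P·R·P⁻¹, S⟩` is isomorphic to the symmetric group `S₃`. -/
theorem G0tilde_iso_S3 :
    Nonempty ((Subgroup.closure {P * R * P⁻¹, S} : Subgroup (Equiv.Perm (Fin 15))) ≃*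
      Equiv.Perm (Fin 3)) :=
  ⟨(MulEquiv.subgroupCongr G0aux.range_eq.symm).trans
    (MonoidHom.ofInjective G0aux.psi_inj).symm⟩
end

section
/- One has the chain of subgroup inclusions 𝒢₀ ≤ 𝒢₁ ≤ 𝒢₂ and 𝒢̃₀ ≤ 𝒢₁, where 𝒢₀ = ⟨R, S⟩, 𝒢̃₀ = ⟨P·R·P⁻¹, S⟩, 𝒢₁ = ⟨P, S⟩ and 𝒢₂ = ⟨P, T⟩ are subgroups of the symmetric group on 15 elements. (In particular S lies in ⟨P, T⟩ and R lies in ⟨P, S⟩.) -/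
set_option maxRecDepth 10000

lemma R_eq : R = S * P⁻¹ * S * P⁻¹ * P⁻¹ * S := by decide

lemma S_eq : S = P * T * P * P * T := by decide

lemma hP : P ∈ Subgroup.closure ({P, S} : Set (Equiv.Perm (Fin 15))) :=
  Subgroup.subset_closure (Or.inl rfl)

lemma hS : S ∈ Subgroup.closure ({P, S} : Set (Equiv.Perm (Fin 15))) :=
  Subgroup.subset_closure (Or.inr rfl)

lemma hR : R ∈ Subgroup.closure ({P, S} : Set (Equiv.Perm (Fin 15))) := by
  rw [R_eq]
  exact mul_mem (mul_mem (mul_mem (mul_mem (mul_mem hS (inv_mem hP)) hS) (inv_mem hP))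
    (inv_mem hP)) hS

/-- the chain of inclusions `𝒢₀ ≤ 𝒢₁ ≤ 𝒢₂` and `𝒢̃₀ ≤ 𝒢₁`. -/
theorem subgroup_chain :
    (Subgroup.closure {R, S} : Subgroup (Equiv.Perm (Fin 15))) ≤ Subgroup.closure {P, S} ∧
    (Subgroup.closure {P, S} : Subgroup (Equiv.Perm (Fin 15))) ≤ Subgroup.closure {P, T} ∧
    (Subgroup.closure {P * R * P⁻¹, S} : Subgroup (Equiv.Perm (Fin 15))) ≤
      Subgroup.closure {P, S} := by
  refine ⟨?_, ?_, ?_⟩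
  · rw [Subgroup.closure_le]
    rintro x (rfl | rfl)
    · exact hR
    · exact hS
  · rw [Subgroup.closure_le]
    have hP' : P ∈ Subgroup.closure ({P, T} : Set (Equiv.Perm (Fin 15))) :=
      Subgroup.subset_closure (Or.inl rfl)
    have hT' : T ∈ Subgroup.closure ({P, T} : Set (Equiv.Perm (Fin 15))) :=
      Subgroup.subset_closure (Or.inr rfl)
    rintro x (rfl | rfl)
    · exact hP'
    · rw [S_eq]
      exact mul_mem (mul_mem (mul_mem (mul_mem hP' hT') hP') hP') hT'
  · rw [Subgroup.closure_le]
    rintro x (rfl | rfl)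
    · exact mul_mem (mul_mem hP hR) (inv_mem hP)
    · exact hS
end

section
/- The Brehm–Kühnel complex M⁸₁₅ is 5-neighbourly: every 5-element subset of {1,…,15} is contained in some element of Facets (i.e., any 5 vertices of M⁸₁₅ span a simplex of the complex). -/
/-- The twelve 9-element subsets spanning `𝒦₀` (labels in `Fin 15`, with 15 ↦ 0). -/
def A : Finset (Fin 15) := {1, 2, 3, 6, 8, 11, 13, 14, 15}
def B : Finset (Fin 15) := {1, 3, 6, 8, 9, 10, 11, 12, 13}
def C : Finset (Fin 15) := {1, 2, 6, 9, 10, 11, 12, 14, 15}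
def D : Finset (Fin 15) := {1, 2, 3, 4, 7, 9, 12, 14, 15}
def E : Finset (Fin 15) := {1, 2, 4, 7, 9, 10, 12, 13, 14}
def F : Finset (Fin 15) := {1, 2, 6, 8, 9, 10, 11, 14, 15}
def G : Finset (Fin 15) := {1, 2, 3, 4, 5, 6, 9, 11, 13}
def H : Finset (Fin 15) := {1, 3, 5, 6, 8, 9, 10, 11, 12}
def I : Finset (Fin 15) := {1, 3, 5, 6, 7, 8, 9, 10, 11}
def J : Finset (Fin 15) := {1, 2, 3, 4, 5, 7, 10, 12, 15}
def K : Finset (Fin 15) := {1, 2, 3, 7, 8, 10, 12, 13, 14}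
def M : Finset (Fin 15) := {2, 5, 6, 7, 8, 9, 10, 13, 14}
/-- `L₍₁₎ = {3,4,6,7,11,12,13,14,15}`. -/
def L1 : Finset (Fin 15) := {3, 4, 6, 7, 11, 12, 13, 14, 15}
/-- `N₍₁₎ = {3,4,6,7,10,12,13,14,15}`. -/
def N1 : Finset (Fin 15) := {3, 4, 6, 7, 10, 12, 13, 14, 15}

/-- The set of 8-dimensional (maximal) simplices of the Brehm--Kühnel complex `M⁸₁₅`:
all images `g·X` for `g ∈ 𝒢₁ = ⟨P, S⟩` and `X` among the fourteen listed 9-element sets. -/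
def Facets : Set (Finset (Fin 15)) :=
  { Y | ∃ g ∈ (Subgroup.closure {P, S} : Subgroup (Equiv.Perm (Fin 15))),
      ∃ X ∈ ({A, B, C, D, E, F, G, H, I, J, K, M, L1, N1} : Set (Finset (Fin 15))),
        Y = X.image g }

/-! The group `𝒢₁ = ⟨P, S⟩` preserves `Facets` and acts transitively on the vertices, so it
suffices that the link of vertex `1` is `4`-neighbourly: any four vertices lie in a common facet
through `1`. This is a finite check against `39` facets through `1`, each exhibited as the image
of one of the fourteen base facets under an element `P ^ a * S ^ b * P ^ c` of `𝒢₁`. -/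

open Finset Equiv

section Neighbourly

variable {α : Type*}

def Neighbourly (𝓕 : Set (Finset α)) (k : ℕ) : Prop :=
  ∀ s : Finset α, s.card = k → ∃ Y ∈ 𝓕, s ⊆ Y

theorem Neighbourly.of_link [DecidableEq α] {𝓕 : Set (Finset α)} {k : ℕ} (Γ : Subgroup (Perm α))
    (h𝓕 : ∀ g ∈ Γ, ∀ Y ∈ 𝓕, Y.image g ∈ 𝓕) (v : α) (hv : ∀ x, ∃ g ∈ Γ, g x = v)
    (hlink : ∀ t : Finset α, t.card = k → ∃ Y ∈ 𝓕, insert v t ⊆ Y) :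
    Neighbourly 𝓕 (k + 1) := by
  intro s hs
  obtain ⟨x, hx⟩ : s.Nonempty := card_pos.1 (by omega)
  obtain ⟨g, hg, rfl⟩ := hv x
  have hgx : g x ∈ s.image g := mem_image_of_mem g hx
  obtain ⟨Y, hY, hsY⟩ := hlink ((s.image g).erase (g x)) (by
    rw [card_erase_of_mem hgx, card_image_of_injective _ g.injective, hs, Nat.add_sub_cancel])
  rw [insert_erase hgx] at hsY
  refine ⟨Y.image (g⁻¹ : Perm α), h𝓕 _ (Γ.inv_mem hg) Y hY, fun y hy => mem_image.2 ⟨g y, ?_, ?_⟩⟩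
  · exact hsY (mem_image_of_mem g hy)
  · simp

end Neighbourly

theorem Multiset.exists_mem_sublistsLen_of_le {α : Type*} {s : Multiset α} {l : List α}
    (h : s ≤ l) : ∃ l' ∈ l.sublistsLen (Multiset.card s), (l' : Multiset α) = s := by
  have hs := Multiset.mem_powersetCard.2 ⟨h, rfl⟩
  rw [Multiset.powersetCard_coe] at hs
  simpa using hs

abbrev 𝒢₁ : Subgroup (Perm (Fin 15)) := Subgroup.closure {P, S}

theorem P_mem_closure : P ∈ 𝒢₁ := Subgroup.subset_closure (by simp)

theorem S_mem_closure : S ∈ 𝒢₁ := Subgroup.subset_closure (by simp)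

theorem image_mem_facets {g : Perm (Fin 15)} (hg : g ∈ 𝒢₁) {Y : Finset (Fin 15)}
    (hY : Y ∈ Facets) : Y.image g ∈ Facets := by
  obtain ⟨h, hh, X, hX, rfl⟩ := hY
  exact ⟨g * h, mul_mem hg hh, X, hX, by rw [image_image]; rfl⟩

theorem exists_mem_closure_apply_eq_one (x : Fin 15) : ∃ g ∈ 𝒢₁, g x = 1 := by
  -- `P ^ a` moves `x` into `{1, 6, 11}`, the orbit of `1` under `S`
  obtain ⟨a, -, b, -, h⟩ : ∃ a < 5, ∃ b < 3, (S ^ b * P ^ a) x = 1 := by revert x; decide +kernel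
  exact ⟨_, mul_mem (pow_mem S_mem_closure b) (pow_mem P_mem_closure a), h⟩

structure FacetWitness where
  base : Finset (Fin 15)
  a : ℕ
  b : ℕ
  c : ℕ
  vertices : List (Fin 15)

def FacetWitness.perm (w : FacetWitness) : Perm (Fin 15) := P ^ w.a * S ^ w.b * P ^ w.c

def linkCover : List FacetWitness := [
  ⟨E, 0, 0, 4, [1, 3, 5, 6, 8, 9, 11, 12, 13]⟩,
  ⟨J, 1, 2, 1, [1, 2, 4, 7, 8, 9, 12, 14, 15]⟩,
  ⟨B, 1, 2, 1, [1, 2, 4, 5, 6, 10, 11, 13, 15]⟩,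
  ⟨K, 0, 1, 3, [1, 3, 4, 6, 7, 9, 10, 11, 14]⟩,
  ⟨K, 0, 0, 0, [1, 2, 3, 7, 8, 10, 12, 13, 14]⟩,
  ⟨H, 1, 2, 4, [1, 3, 5, 6, 7, 8, 13, 14, 15]⟩,
  ⟨H, 2, 2, 2, [1, 3, 5, 9, 10, 11, 12, 14, 15]⟩,
  ⟨L1, 2, 2, 0, [1, 2, 3, 4, 5, 6, 8, 10, 12]⟩,
  ⟨F, 1, 2, 2, [1, 2, 4, 5, 7, 9, 10, 13, 14]⟩,
  ⟨E, 0, 1, 2, [1, 2, 5, 6, 7, 11, 12, 13, 14]⟩,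
  ⟨N1, 0, 0, 3, [1, 2, 8, 9, 10, 11, 12, 13, 15]⟩,
  ⟨F, 2, 2, 3, [1, 2, 3, 5, 6, 7, 9, 12, 15]⟩,
  ⟨J, 0, 1, 1, [1, 3, 4, 6, 7, 8, 11, 13, 15]⟩,
  ⟨N1, 0, 1, 1, [1, 2, 3, 4, 5, 7, 8, 11, 14]⟩,
  ⟨M, 0, 0, 4, [1, 4, 6, 7, 8, 9, 10, 12, 13]⟩,
  ⟨D, 0, 2, 2, [1, 5, 6, 7, 8, 9, 10, 11, 15]⟩,
  ⟨J, 1, 2, 3, [1, 3, 4, 8, 9, 12, 13, 14, 15]⟩,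
  ⟨A, 0, 0, 0, [1, 2, 3, 6, 8, 11, 13, 14, 15]⟩,
  ⟨D, 3, 2, 4, [1, 4, 6, 9, 10, 11, 12, 13, 14]⟩,
  ⟨J, 0, 0, 3, [1, 2, 3, 4, 5, 8, 10, 13, 15]⟩,
  ⟨L1, 3, 2, 4, [1, 4, 5, 6, 7, 9, 12, 13, 15]⟩,
  ⟨L1, 0, 1, 3, [1, 2, 6, 8, 9, 10, 12, 14, 15]⟩,
  ⟨J, 0, 0, 4, [1, 2, 3, 4, 5, 6, 9, 11, 14]⟩,
  ⟨L1, 3, 2, 1, [1, 2, 3, 5, 7, 9, 10, 11, 13]⟩,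
  ⟨N1, 0, 0, 2, [1, 5, 7, 8, 9, 11, 12, 14, 15]⟩,
  ⟨H, 2, 2, 3, [1, 2, 3, 4, 7, 10, 12, 13, 15]⟩,
  ⟨A, 0, 1, 3, [1, 2, 4, 6, 7, 8, 10, 11, 12]⟩,
  ⟨F, 1, 2, 3, [1, 2, 4, 5, 6, 8, 10, 11, 14]⟩,
  ⟨A, 0, 1, 1, [1, 2, 5, 7, 10, 12, 13, 14, 15]⟩,
  ⟨B, 0, 0, 3, [1, 4, 6, 7, 8, 9, 11, 14, 15]⟩,
  ⟨B, 0, 2, 1, [1, 3, 4, 5, 9, 10, 12, 14, 15]⟩,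
  ⟨B, 0, 1, 3, [1, 2, 3, 5, 6, 7, 11, 12, 14]⟩,
  ⟨L1, 0, 2, 0, [1, 2, 3, 4, 5, 6, 8, 9, 15]⟩,
  ⟨E, 1, 2, 0, [1, 4, 5, 6, 10, 11, 12, 13, 15]⟩,
  ⟨M, 0, 0, 1, [1, 3, 6, 7, 8, 9, 10, 14, 15]⟩,
  ⟨H, 0, 1, 0, [1, 3, 4, 6, 9, 10, 11, 12, 13]⟩,
  ⟨F, 0, 1, 2, [1, 3, 5, 7, 8, 9, 10, 11, 13]⟩,
  ⟨J, 2, 2, 2, [1, 2, 6, 7, 9, 10, 11, 12, 13]⟩,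
  ⟨H, 2, 2, 4, [1, 2, 4, 7, 8, 9, 11, 14, 15]⟩]

theorem linkCover_valid : ∀ w ∈ linkCover,
    w.base ∈ [A, B, C, D, E, F, G, H, I, J, K, M, L1, N1] ∧
      w.vertices.toFinset = w.base.image w.perm := by
  decide +kernel

theorem linkCover_covers : ∀ l ∈ (List.finRange 15).sublistsLen 4,
    ∃ w ∈ linkCover, 1 ∈ w.vertices ∧ l ⊆ w.vertices := by
  decide +kernel

theorem toFinset_vertices_mem_facets {w : FacetWitness} (hw : w ∈ linkCover) :
    w.vertices.toFinset ∈ Facets := by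
  obtain ⟨hbase, hw⟩ := linkCover_valid w hw
  refine ⟨w.perm, ?_, w.base, by simpa using hbase, hw⟩
  exact mul_mem (mul_mem (pow_mem P_mem_closure _) (pow_mem S_mem_closure _))
    (pow_mem P_mem_closure _)

theorem link_one_neighbourly (t : Finset (Fin 15)) (ht : t.card = 4) :
    ∃ Y ∈ Facets, insert 1 t ⊆ Y := by
  obtain ⟨l, hl, hlt⟩ := Multiset.exists_mem_sublistsLen_of_le (val_le_iff.2 (subset_univ t))
  obtain ⟨w, hw, h1, hlw⟩ := linkCover_covers l (by rwa [card_val, ht] at hl)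
  refine ⟨w.vertices.toFinset, toFinset_vertices_mem_facets hw, insert_subset (by simpa) ?_⟩
  intro x hx
  rw [← mem_val, ← hlt] at hx
  exact List.mem_toFinset.2 (hlw hx)

/-- `M⁸₁₅` is 5-neighbourly: every 5-element subset of the vertex set is
contained in some facet. -/
theorem five_neighbourly :
    ∀ s : Finset (Fin 15), s.card = 5 → ∃ Fa ∈ Facets, s ⊆ Fa :=
  Neighbourly.of_link 𝒢₁ (fun _ hg _ hY => image_mem_facets hg hY) 1
    exists_mem_closure_apply_eq_one link_one_neighbourly
end
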